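/- Any sublist of a valid order of removal steps is itself a valid order of removal steps: if ℓ ∈ RO(I) and ℓ' is a sublist of ℓ (preserving order), then ℓ' ∈ RO(I). -/

import Mathlib

/-- Redundancy of input `i` in input set `I`:
`min { |Seq(bl) ∩ I| : bl ∈ Cov i } − 1`, where `Seq(bl) = {x : bl ∈ Cov x}`. -/
noncomputable def red {Inp Obj : Type*} [DecidableEq Obj]
    (Cov : Inp → Finset Obj) (i : Inp) (I : Finset Inp) : ℤ :=
  ((sInf {n : ℕ | ∃ bl ∈ Cov i, (I.filter fun x => bl ∈ Cov x).card = n} : ℕ) : ℤ) - 1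

/-- A list is a valid order of removal steps for `I`. -/
noncomputable def RO {Inp Obj : Type*} [DecidableEq Inp] [DecidableEq Obj]
    (Cov : Inp → Finset Obj) : Finset Inp → List Inp → Prop
  | _, [] => True
  | I, i :: l => i ∈ I ∧ 0 < red Cov i I ∧ RO Cov (I.erase i) l

/-! Redundancy can only drop when inputs are removed, so a removal order that is valid for a
set `S` stays valid for every `I ⊇ S`. Skipping a step of an order only enlarges the sets in
which the later steps are taken, so the remaining steps stay valid. -/

theorem Nat.sInf_image_mono {α : Type*} {s : Set α} {f g : α → ℕ} (h : ∀ a ∈ s, f a ≤ g a) :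
    sInf (f '' s) ≤ sInf (g '' s) := by
  rw [sInf_image', sInf_image']
  exact ciInf_mono (OrderBot.bddBelow _) fun a => h a a.2

theorem red_mono {Inp Obj : Type*} [DecidableEq Obj] (Cov : Inp → Finset Obj) (i : Inp) :
    Monotone (red Cov i) := by
  intro S I hSI
  unfold red
  refine Int.sub_le_sub_right (Nat.cast_le.mpr ?_) 1
  refine Nat.sInf_image_mono (s := (Cov i : Set Obj)) fun _ _ => ?_
  exact Finset.card_le_card (Finset.filter_subset_filter _ hSI)

theorem RO.mono {Inp Obj : Type*} [DecidableEq Inp] [DecidableEq Obj]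
    {Cov : Inp → Finset Obj} {S I : Finset Inp} {l : List Inp} (hl : RO Cov S l) (hSI : S ⊆ I) :
    RO Cov I l := by
  induction l generalizing S I with
  | nil => trivial
  | cons i l ih =>
    obtain ⟨hi, hred, hrest⟩ := hl
    exact ⟨hSI hi, hred.trans_le (red_mono Cov i hSI), ih hrest (Finset.erase_subset_erase i hSI)⟩

theorem RO.of_cons {Inp Obj : Type*} [DecidableEq Inp] [DecidableEq Obj]
    {Cov : Inp → Finset Obj} {I : Finset Inp} {i : Inp} {l : List Inp}
    (hl : RO Cov I (i :: l)) : RO Cov I l :=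
  hl.2.2.mono (Finset.erase_subset i I)

theorem sublist_RO_general {Inp Obj : Type*} [DecidableEq Inp] [DecidableEq Obj]
    (Cov : Inp → Finset Obj)
    (I : Finset Inp) (l l' : List Inp) (hl : RO Cov I l) (hsub : l'.Sublist l) :
    RO Cov I l' := by
  induction hsub generalizing I with
  | slnil => trivial
  | cons i _ ih => exact ih I hl.of_cons
  | cons_cons i _ ih => exact ⟨hl.1, hl.2.1, ih _ hl.2.2⟩

/-- Any sublist of a valid order of removal steps is a valid order of removal steps. -/
theorem sublist_RO {Inp Obj : Type*} [DecidableEq Inp] [DecidableEq Obj]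
    (Cov : Inp → Finset Obj) (hCov : ∀ i : Inp, (Cov i).Nonempty)
    (I : Finset Inp) (l l' : List Inp) (hl : RO Cov I l) (hsub : l'.Sublist l) :
    RO Cov I l' :=
  sublist_RO_general Cov I l l' hl hsub
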